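/- arXiv:2111.08325 — 2 statements merged into one kernel-verified Lean document; each statement's English description precedes it below -/
import Mathlib

section
/- Let f be a homeomorphism of a compact metric space X onto itself, and suppose (X,f) has a nondecreasing sequence of f-invariant compact subsets X_1 ⊆ X_2 ⊆ … ⊆ X such that the closure of ∪_{n≥1} X_n equals X, the restriction f|_{X_1} has a periodic point, and each subsystem (X_n, f|_{X_n}) has the shadowing property and is transitive. If for some n_0 ∈ ℕ⁺ the set X_{n_0} is not a single periodic orbit and (X_{n_0}, f|_{X_{n_0}}) has the uniform separation property, then the set {φ ∈ C(X,ℝ) : I_φ(f) ∩ X_{n_0} ≠ ∅} is open and dense in C(X,ℝ) with the supremum norm. -/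
set_option linter.unusedSectionVars false

open MeasureTheory Filter Set Topology ENNReal

section Defs

variable {X : Type*} [MetricSpace X] [CompactSpace X] [MeasurableSpace X] [BorelSpace X]

/-- The Bowen ball of order `n` and radius `ε` centered at `x`. -/
def bowenBall (f : X → X) (n : ℕ) (x : X) (ε : ℝ) : Set X :=
  {y | ∀ j < n, dist (f^[j] x) (f^[j] y) < ε}

/-- `M^s(Z)`, the quantity appearing in Bowen's definition of the topological
entropy of `f` on the subset `Z`. -/
noncomputable def bowenM (f : X → X) (Z : Set X) (s : ℝ) : ℝ≥0∞ :=
  ⨆ (ε : ℝ) (_ : 0 < ε), ⨆ N : ℕ,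
    sInf {t : ℝ≥0∞ | ∃ c : Set (X × ℕ), c.Countable ∧ (∀ p ∈ c, N ≤ p.2) ∧
      Z ⊆ (⋃ p ∈ c, bowenBall f p.2 p.1 ε) ∧
      t = ∑' p : c, ENNReal.ofReal (Real.exp (-(s * ((p : X × ℕ).2 : ℝ))))}

/-- The Bowen topological entropy of `f` on the subset `Z`, defined as the critical
value of `s ↦ M^s(Z)`. -/
noncomputable def htop (f : X → X) (Z : Set X) : ℝ≥0∞ :=
  ⨆ (s : ℝ) (_ : bowenM f Z s = ⊤), ENNReal.ofReal s

/-- `ξ` is a finite measurable partition of the space. -/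
def IsFinPartition {m : ℕ} (ξ : Fin m → Set X) : Prop :=
  (∀ i, MeasurableSet (ξ i)) ∧ Pairwise (Function.onFun Disjoint ξ) ∧ (⋃ i, ξ i) = Set.univ

/-- The static entropy `H_μ` of a finite family of sets. -/
noncomputable def partInfo (μ : Measure X) {ι : Type} [Fintype ι] (A : ι → Set X) : ℝ :=
  ∑ i, Real.negMulLog ((μ (A i)).toReal)

/-- The join `⋁_{i=0}^{n-1} f^{-i} ξ` of the partition `ξ`. -/
def iterJoin (f : X → X) {m : ℕ} (ξ : Fin m → Set X) (n : ℕ) : (Fin n → Fin m) → Set X :=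
  fun c => ⋂ i : Fin n, f^[(i : ℕ)] ⁻¹' ξ (c i)

/-- The entropy of `f` with respect to `μ` and the finite partition `ξ`
(for an invariant measure the defining limit equals the infimum, by subadditivity). -/
noncomputable def entOfPart (f : X → X) (μ : Measure X) {m : ℕ} (ξ : Fin m → Set X) : ℝ :=
  ⨅ n : ℕ, partInfo μ (iterJoin f ξ (n + 1)) / ((n : ℝ) + 1)

/-- The measure-theoretic (Kolmogorov–Sinai) entropy `h_μ(f)`. -/
noncomputable def msEntropy (f : X → X) (μ : Measure X) : ℝ≥0∞ :=
  ⨆ (m : ℕ) (ξ : Fin m → Set X) (_ : IsFinPartition ξ), ENNReal.ofReal (entOfPart f μ ξ)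

/-- The set `M_f(X)` of `f`-invariant Borel probability measures. -/
def invMeas (f : X → X) : Set (ProbabilityMeasure X) :=
  {μ | (μ : Measure X).map f = (μ : Measure X)}

/-- The set `M_{f|_Y}(Y)` of invariant measures of the subsystem `(Y, f|_Y)`,
viewed as measures on `X` giving full mass to `Y`. -/
def invMeasOn (f : X → X) (Y : Set X) : Set (ProbabilityMeasure X) :=
  {μ | μ ∈ invMeas f ∧ (μ : Measure X) Y = 1}

/-- The support `S_μ` of a measure: points all of whose neighborhoods have
positive measure. -/
def suppMeas (μ : Measure X) : Set X :=
  {x | ∀ U : Set X, IsOpen U → x ∈ U → 0 < μ U}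

lemma empAux_isProb (f : X → X) (x : X) {n : ℕ} (hn : n ≠ 0) :
    IsProbabilityMeasure ((n : ℝ≥0∞)⁻¹ • ∑ i ∈ Finset.range n, Measure.dirac (f^[i] x)) := by
  constructor
  have h1 : (∑ i ∈ Finset.range n, Measure.dirac (f^[i] x)) Set.univ = n := by
    rw [Measure.finset_sum_apply]
    simp
  rw [Measure.smul_apply, h1, smul_eq_mul]
  exact ENNReal.inv_mul_cancel (by exact_mod_cast hn) (ENNReal.natCast_ne_top n)

/-- The `n`-th empirical measure `E_n(x) = (1/n) ∑_{i<n} δ_{f^i x}`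
(with the junk value `δ_x` at `n = 0`). -/
noncomputable def empMeas (f : X → X) (x : X) (n : ℕ) : ProbabilityMeasure X :=
  if hn : n = 0 then ⟨Measure.dirac x, by infer_instance⟩
  else ⟨(n : ℝ≥0∞)⁻¹ • ∑ i ∈ Finset.range n, Measure.dirac (f^[i] x), empAux_isProb f x hn⟩

/-- `V_f(x)`: the set of weak* limit points of the sequence of empirical measures of `x`. -/
def vSet (f : X → X) (x : X) : Set (ProbabilityMeasure X) :=
  {μ | MapClusterPt μ atTop fun n => empMeas f x n}

/-- The saturated set `G_K = {x : V_f(x) = K}`. -/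
def gSet (f : X → X) (K : Set (ProbabilityMeasure X)) : Set X :=
  {x | vSet f x = K}

/-- The set of transitive points (points with dense forward orbit). -/
def transPts (f : X → X) : Set X :=
  {x | Dense (Set.range fun n => f^[n] x)}

/-- The set `QR(f)` of quasiregular points: points whose empirical measures converge. -/
def qrPts (f : X → X) : Set X :=
  {x | ∃ μ : ProbabilityMeasure X, vSet f x = {μ}}

/-- The number of times `0 ≤ j < n` at which the orbits of `x` and `y` are
`ε`-apart. -/
noncomputable def sepNum (f : X → X) (n : ℕ) (ε : ℝ) (x y : X) : ℕ :=
  {j | j < n ∧ ε < dist (f^[j] x) (f^[j] y)}.ncard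

/-- The exponential function on `ℝ≥0∞`. -/
noncomputable def expEnn (a : ℝ≥0∞) : ℝ≥0∞ :=
  if a = ⊤ then ⊤ else ENNReal.ofReal (Real.exp a.toReal)

/-- The uniform separation property for the subsystem `(Y, f|_Y)`: for every `η > 0`
there are `δ* > 0`, `ε* > 0` such that for every ergodic invariant measure `μ` of the
subsystem and every weak* neighborhood `F` of `μ` there is `n*` such that for all
`n ≥ n*` there is a `(δ*, n, ε*)`-separated set `Γ ⊆ X_{n,F} ∩ S_μ` with
`|Γ| ≥ e^{n (h_μ(f) - η)}`. -/
def UnifSepOn (f : X → X) (Y : Set X) : Prop :=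
  ∀ η : ℝ, 0 < η → ∃ δ : ℝ, 0 < δ ∧ ∃ ε : ℝ, 0 < ε ∧
    ∀ μ : ProbabilityMeasure X, Ergodic f (μ : Measure X) → (μ : Measure X) Y = 1 →
      ∀ F : Set (ProbabilityMeasure X), F ∈ 𝓝 μ →
        ∃ nF : ℕ, ∀ n : ℕ, nF ≤ n → ∃ Γ : Finset X,
          (↑Γ ⊆ Y ∩ {x | empMeas f x n ∈ F} ∩ suppMeas (μ : Measure X)) ∧
          (∀ x ∈ Γ, ∀ y ∈ Γ, x ≠ y → δ * n ≤ (sepNum f n ε x y : ℝ)) ∧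
          expEnn ((n : ℝ≥0∞) * msEntropy f (μ : Measure X)) ≤
            (Γ.card : ℝ≥0∞) * ENNReal.ofReal (Real.exp (n * η))

/-- The specification property for the subsystem `(Y, f|_Y)`. -/
def SpecOn (f : X → X) (Y : Set X) : Prop :=
  ∀ ε : ℝ, 0 < ε → ∃ K : ℕ, 0 < K ∧
    ∀ s : ℕ, 2 ≤ s → ∀ x : ℕ → X, (∀ i < s, x i ∈ Y) →
      ∀ a b : ℕ → ℕ, a 0 = 0 → (∀ i < s, a i ≤ b i) →
        (∀ i, i + 1 < s → b i + K ≤ a (i + 1)) →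
        ∃ z ∈ Y, ∀ i < s, ∀ j, a i ≤ j → j ≤ b i →
          dist (f^[j] z) (f^[j - a i] (x i)) ≤ ε

/-- The shadowing property for the subsystem `(Y, f|_Y)`. -/
def ShadowOn (f : X → X) (Y : Set X) : Prop :=
  ∀ ε : ℝ, 0 < ε → ∃ δ : ℝ, 0 < δ ∧
    ∀ u : ℕ → X, (∀ n, u n ∈ Y) → (∀ n, dist (u (n + 1)) (f (u n)) < δ) →
      ∃ y ∈ Y, ∀ n, dist (f^[n] y) (u n) < ε

/-- Transitivity of the subsystem `(Y, f|_Y)`: some point of `Y` has forward orbit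
dense in `Y`. -/
def TransOn (f : X → X) (Y : Set X) : Prop :=
  ∃ x ∈ Y, Y ⊆ closure (Set.range fun n => f^[n] x)

/-- `S` is the orbit of a periodic point. -/
def IsPeriodicOrbit (f : X → X) (S : Set X) : Prop :=
  ∃ x : X, (∃ m : ℕ, 0 < m ∧ f^[m] x = x) ∧ S = Set.range fun n => f^[n] x

/-- The irregular set `I_φ(f)` of the observable `φ`: points where the Birkhoff
averages of `φ` do not converge. -/
def irreg (f : X → X) (φ : X → ℝ) : Set X :=
  {x | ¬ ∃ c : ℝ, Tendsto (fun n : ℕ => (∑ i ∈ Finset.range n, φ (f^[i] x)) / (n : ℝ))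
    atTop (𝓝 c)}

end Defs

/-!
Openness: at a fixed point the Birkhoff averages are `1`-Lipschitz in the observable, uniformly
in time, so the observables whose averages there form a Cauchy sequence are a closed set.

Density: if `y ∈ X_{n₀}` is irregular for some `g`, then for every `φ` it is irregular either for
`φ` or for all `φ + t • g` with `t ≠ 0`. Such `g` and `y` exist: take `z ∈ X_{n₀}` off the
periodic orbit `O` and a Urysohn function `g` equal to `1` near `z` and `0` near `O`.
Transitivity gives a `δ`-chain loop `p → z → p` of some length `ℓ`. A `δ`-pseudo-orbit made of
consecutive blocks, the one starting at time `s` running `s + 1` times around this loop and then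
far longer along `O`, is shadowed by a point `y` whose `g`-averages keep oscillating between
`≥ 1 / (1 + ℓ)` and `≤ 1 / (3 + 2ℓ)`.
-/

open Metric

section BirkhoffAverages

variable {X : Type*} {f : X → X}

lemma mem_irreg_iff {φ : X → ℝ} {x : X} :
    x ∈ irreg f φ ↔ ¬ ∃ c, Tendsto (birkhoffAverage ℝ f φ · x) atTop (𝓝 c) := by
  simp only [irreg, mem_ofPred_eq, birkhoffAverage, birkhoffSum, smul_eq_mul, inv_mul_eq_div]

lemma birkhoffAverage_add_smul (φ g : X → ℝ) (t : ℝ) (n : ℕ) (x : X) :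
    birkhoffAverage ℝ f (φ + t • g) n x =
      birkhoffAverage ℝ f φ n x + t * birkhoffAverage ℝ f g n x := by
  simp only [birkhoffAverage, birkhoffSum, Pi.add_apply, Pi.smul_apply, smul_eq_mul,
    Finset.sum_add_distrib, ← Finset.mul_sum]
  ring

lemma mem_irreg_add_smul {φ g : X → ℝ} {y : X} (hφ : y ∉ irreg f φ) (hg : y ∈ irreg f g)
    {t : ℝ} (ht : t ≠ 0) : y ∈ irreg f (φ + t • g) := by
  rw [mem_irreg_iff, not_not] at hφ
  rw [mem_irreg_iff] at hg ⊢
  obtain ⟨c, hc⟩ := hφ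
  rintro ⟨c', hc'⟩
  refine hg ⟨t⁻¹ * (c' - c), ((hc'.sub hc).const_mul t⁻¹).congr fun n => ?_⟩
  rw [birkhoffAverage_add_smul]
  field_simp
  ring

lemma abs_birkhoffAverage_le {g : X → ℝ} {C : ℝ} (hC : 0 ≤ C) (hg : ∀ x, |g x| ≤ C)
    (n : ℕ) (x : X) : |birkhoffAverage ℝ f g n x| ≤ C := by
  rcases n.eq_zero_or_pos with rfl | hn
  · simpa using hC
  rw [birkhoffAverage, smul_eq_mul, abs_mul, abs_inv, Nat.abs_cast,
    inv_mul_le_iff₀ (by positivity)]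
  calc |birkhoffSum f g n x| ≤ ∑ i ∈ Finset.range n, |g (f^[i] x)| :=
        Finset.abs_sum_le_sum_abs _ _
    _ ≤ n * C := by
        simpa using Finset.sum_le_card_nsmul (Finset.range n) _ C fun i _ => hg (f^[i] x)

lemma isClosed_setOf_cauchySeq {α β : Type*} [PseudoMetricSpace α] [PseudoMetricSpace β]
    {F : ℕ → α → β} (hF : ∀ n, LipschitzWith 1 (F n)) :
    IsClosed {a | CauchySeq fun n => F n a} := by
  refine isClosed_of_closure_subset fun a ha => Metric.cauchySeq_iff.2 fun ε hε => ?_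
  obtain ⟨b, hb, hab⟩ := Metric.mem_closure_iff.1 ha (ε / 3) (by positivity)
  obtain ⟨N, hN⟩ := Metric.cauchySeq_iff.1 hb (ε / 3) (by positivity)
  have hFab : ∀ k, dist (F k a) (F k b) < ε / 3 := fun k =>
    ((hF k).dist_le_mul a b).trans_lt (by simpa using hab)
  refine ⟨N, fun m hm n hn => ?_⟩
  calc dist (F m a) (F n a)
      ≤ dist (F m a) (F m b) + dist (F m b) (F n b) + dist (F n b) (F n a) :=
        dist_triangle4 _ _ _ _
    _ < ε / 3 + ε / 3 + ε / 3 := by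
        gcongr
        · exact hFab m
        · exact hN m hm n hn
        · rw [dist_comm]; exact hFab n
    _ = ε := by ring

variable [TopologicalSpace X] [CompactSpace X]

lemma lipschitzWith_birkhoffAverage_apply (n : ℕ) (x : X) :
    LipschitzWith 1 fun φ : C(X, ℝ) => birkhoffAverage ℝ f φ n x := by
  refine LipschitzWith.of_dist_le_mul fun φ ψ => ?_
  have hsub : birkhoffAverage ℝ f φ n x - birkhoffAverage ℝ f ψ n x =
      birkhoffAverage ℝ f (⇑φ - ⇑ψ) n x := by
    rw [birkhoffAverage_sub, Pi.sub_apply, Pi.sub_apply]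
  rw [NNReal.coe_one, one_mul, Real.dist_eq, hsub]
  exact abs_birkhoffAverage_le dist_nonneg
    (fun y => by rw [Pi.sub_apply, ← Real.dist_eq]; exact ContinuousMap.dist_apply_le_dist y) n x

lemma isOpen_setOf_mem_irreg (x : X) : IsOpen {φ : C(X, ℝ) | x ∈ irreg f φ} := by
  have : {φ : C(X, ℝ) | x ∈ irreg f φ} =
      {φ : C(X, ℝ) | CauchySeq fun n => birkhoffAverage ℝ f φ n x}ᶜ := by
    ext φ
    simp only [mem_ofPred_eq, mem_compl_iff, mem_irreg_iff, CauchySeq,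
      cauchy_map_iff_exists_tendsto]
  rw [this]
  exact (isClosed_setOf_cauchySeq fun n => lipschitzWith_birkhoffAverage_apply n x).isOpen_compl

lemma isOpen_setOf_irreg_inter_nonempty (f : X → X) (Y : Set X) :
    IsOpen {φ : C(X, ℝ) | (irreg f φ ∩ Y).Nonempty} := by
  have : {φ : C(X, ℝ) | (irreg f φ ∩ Y).Nonempty} = ⋃ x ∈ Y, {φ : C(X, ℝ) | x ∈ irreg f φ} := by
    ext φ
    simp [Set.Nonempty, and_comm]
  rw [this]
  exact isOpen_biUnion fun x _ => isOpen_setOf_mem_irreg x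

lemma dense_setOf_irreg_inter_nonempty {Y : Set X} {g : C(X, ℝ)} {y : X} (hy : y ∈ Y)
    (hg : y ∈ irreg f g) : Dense {φ : C(X, ℝ) | (irreg f φ ∩ Y).Nonempty} := by
  intro φ
  by_cases hφ : y ∈ irreg f φ
  · exact subset_closure ⟨y, hφ, hy⟩
  have hlim : Tendsto (fun t : ℝ => φ + t • g) (𝓝[≠] 0) (𝓝 φ) := by
    have hcont : Continuous fun t : ℝ => φ + t • g := by fun_prop
    exact tendsto_nhdsWithin_of_tendsto_nhds (hcont.tendsto' 0 φ (by simp))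
  refine mem_closure_of_tendsto hlim (eventually_nhdsWithin_of_forall fun t ht => ⟨y, ?_, hy⟩)
  simpa using mem_irreg_add_smul hφ hg ht

end BirkhoffAverages

section Chains

variable {X : Type*} [MetricSpace X] {f : X → X} {Y : Set X} {δ : ℝ} {x y w : X}

structure IsChainOn (f : X → X) (Y : Set X) (δ : ℝ) (c : ℕ → X) (L : ℕ) (x y : X) : Prop where
  zero : c 0 = x
  last : c L = y
  mem : ∀ i ≤ L, c i ∈ Y
  dist_lt : ∀ i < L, dist (c (i + 1)) (f (c i)) < δ

lemma isChainOn_iterate (hY : MapsTo f Y Y) (hδ : 0 < δ) (hx : x ∈ Y) (L : ℕ) :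
    IsChainOn f Y δ (fun i => f^[i] x) L x (f^[L] x) where
  zero := rfl
  last := rfl
  mem i _ := hY.iterate i hx
  dist_lt i _ := by simpa [Function.iterate_succ_apply'] using hδ

lemma isChainOn_single (hx : x ∈ Y) (hy : y ∈ Y) (h : dist y (f x) < δ) :
    IsChainOn f Y δ (fun i => if i = 0 then x else y) 1 x y where
  zero := rfl
  last := rfl
  mem i _ := by split_ifs <;> assumption
  dist_lt i hi := by simpa [Nat.lt_one_iff.1 hi] using h

lemma IsChainOn.append {c₁ c₂ : ℕ → X} {L₁ L₂ : ℕ} (h₁ : IsChainOn f Y δ c₁ L₁ x y)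
    (h₂ : IsChainOn f Y δ c₂ L₂ y w) :
    IsChainOn f Y δ (fun i => if i < L₁ then c₁ i else c₂ (i - L₁)) (L₁ + L₂) x w where
  zero := by
    rcases L₁.eq_zero_or_pos with hL | hL
    · simp [hL, h₂.zero, ← h₁.last, h₁.zero]
    · simp [hL, h₁.zero]
  last := by simp [h₂.last]
  mem i hi := by
    split_ifs with h
    · exact h₁.mem i h.le
    · exact h₂.mem _ (by omega)
  dist_lt i hi := by
    rcases lt_trichotomy (i + 1) L₁ with h | h | h
    · simpa [h, (Nat.lt_succ_self i).trans h] using h₁.dist_lt i (by omega)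
    · have := h₁.dist_lt i (by omega)
      simpa [h, show i < L₁ by omega, h₂.zero, ← h₁.last] using this
    · have := h₂.dist_lt (i - L₁) (by omega)
      simpa [show ¬ i < L₁ by omega, show ¬ i + 1 < L₁ by omega,
        show i + 1 - L₁ = i - L₁ + 1 by omega] using this

lemma IsChainOn.repeat {c : ℕ → X} {L : ℕ} (h : IsChainOn f Y δ c L x x) (hL : 0 < L)
    (a : ℕ) : IsChainOn f Y δ (fun i => c (i % L)) (a * L) x x where
  zero := by simp [h.zero]
  last := by simp [h.zero]
  mem i _ := h.mem _ (Nat.mod_lt i hL).le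
  dist_lt i _ := by
    have hstep := h.dist_lt (i % L) (Nat.mod_lt i hL)
    have hi : i + 1 = L * (i / L) + (i % L + 1) := by have := Nat.div_add_mod i L; omega
    rcases Nat.lt_or_eq_of_le (Nat.mod_lt i hL) with hlt | heq
    · rwa [hi, Nat.mul_add_mod, Nat.mod_eq_of_lt hlt]
    · rw [Nat.succ_eq_add_one] at heq
      rw [hi, heq, Nat.mul_add_mod, Nat.mod_self, h.zero, ← h.last]
      rwa [heq] at hstep

end Chains

section ChainTransitivity

variable {X : Type*} [MetricSpace X] {f : X → X} {Y : Set X}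

lemma exists_iterate_dist_lt_of_subset_closure (hf : Continuous f) (hY : SurjOn f Y Y) {t : X}
    (ht : Y ⊆ closure (range fun n => f^[n] t)) {b : X} (hb : b ∈ Y) {η : ℝ} (hη : 0 < η)
    (j : ℕ) : ∃ n ≥ j, dist (f^[n] t) b < η := by
  obtain ⟨b', hb', rfl⟩ := hY.iterate j hb
  obtain ⟨η', hη', hcont⟩ := Metric.continuousAt_iff.1 (hf.iterate j).continuousAt η hη
  obtain ⟨_, ⟨k, rfl⟩, hk⟩ := Metric.mem_closure_iff.1 (ht hb') η' hη'
  refine ⟨j + k, by omega, ?_⟩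
  rw [Function.iterate_add_apply]
  exact hcont (by rwa [dist_comm])

lemma TransOn.exists_isChainOn (htr : TransOn f Y) (hf : Continuous f) (hY : f '' Y = Y)
    {δ : ℝ} (hδ : 0 < δ) {x y : X} (hx : x ∈ Y) (hy : y ∈ Y) :
    ∃ L > 0, ∃ c, IsChainOn f Y δ c L x y := by
  obtain ⟨t, ht, htd⟩ := htr
  have hmaps : MapsTo f Y Y := mapsTo_iff_image_subset.2 hY.subset
  have hsurj : SurjOn f Y Y := hY.symm.subset
  have horb : ∀ i, f^[i] t ∈ Y := fun i => hmaps.iterate i ht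
  obtain ⟨η, hη, hfx⟩ := Metric.continuousAt_iff.1 hf.continuousAt δ hδ
  obtain ⟨k, -, hk⟩ := exists_iterate_dist_lt_of_subset_closure hf hsurj htd hx hη 0
  obtain ⟨n, hn, hny⟩ := exists_iterate_dist_lt_of_subset_closure hf hsurj htd hy hδ (k + 2)
  have hfirst := isChainOn_single (f := f) (δ := δ) hx (horb (k + 1))
    (by rw [Function.iterate_succ_apply']; exact hfx hk)
  have hmiddle := isChainOn_iterate hmaps hδ (horb (k + 1)) (n - 1 - (k + 1))
  rw [← Function.iterate_add_apply, show n - 1 - (k + 1) + (k + 1) = n - 1 by omega] at hmiddle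
  have hlast := isChainOn_single (f := f) (δ := δ) (horb (n - 1)) hy
    (by rwa [← Function.iterate_succ_apply' f, show (n - 1).succ = n by omega, dist_comm])
  exact ⟨_, by omega, _, (hfirst.append hmiddle).append hlast⟩

end ChainTransitivity

section Blocks

/-- `ℕ` cut into consecutive blocks, the one starting at `s` of length `len s`:
`blockStart len n` is the start of the block containing `n`. -/
def blockStart (len : ℕ → ℕ) : ℕ → ℕ
  | 0 => 0
  | n + 1 => if n + 1 = blockStart len n + len (blockStart len n) then n + 1 else blockStart len n

variable {len : ℕ → ℕ}

lemma blockStart_le (len : ℕ → ℕ) (n : ℕ) : blockStart len n ≤ n := by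
  induction n with
  | zero => rfl
  | succ n ih => unfold blockStart; split_ifs <;> omega

lemma lt_blockStart_add (hlen : ∀ s, 0 < len s) (n : ℕ) :
    n < blockStart len n + len (blockStart len n) := by
  induction n with
  | zero => simpa [blockStart] using hlen 0
  | succ n ih =>
    unfold blockStart
    split_ifs with h
    · have := hlen (n + 1); omega
    · omega

lemma blockStart_blockStart (len : ℕ → ℕ) (n : ℕ) :
    blockStart len (blockStart len n) = blockStart len n := by
  induction n with
  | zero => rfl
  | succ n ih =>
    by_cases h : n + 1 = blockStart len n + len (blockStart len n)
    · rw [blockStart, if_pos h, blockStart, if_pos h]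
    · rw [blockStart, if_neg h, ih]

lemma blockStart_add {s r : ℕ} (hs : blockStart len s = s) (hr : r < len s) :
    blockStart len (s + r) = s := by
  induction r with
  | zero => exact hs
  | succ r ih => rw [← add_assoc, blockStart, ih (by omega), if_neg (by omega)]

lemma exists_blockStart_eq (hlen : ∀ s, 0 < len s) (N : ℕ) :
    ∃ s ≥ N, blockStart len s = s := by
  set b := blockStart len N
  have hN := lt_blockStart_add hlen N
  refine ⟨b + len b, hN.le, ?_⟩
  have hprev : blockStart len (b + (len b - 1)) = b :=
    blockStart_add (blockStart_blockStart len N) (by have := hlen b; omega)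
  have hsucc : b + (len b - 1) + 1 = b + len b := by have := hlen b; omega
  rw [← hsucc, blockStart, if_pos (by rw [hprev, hsucc])]

end Blocks

section Gluing

variable {X : Type*} [MetricSpace X] {f : X → X} {Y : Set X}

theorem exists_pseudoOrbit_of_isChainOn {δ : ℝ} {x : X} {len : ℕ → ℕ} (hlen : ∀ s, 0 < len s)
    {W : ℕ → ℕ → X} (hW : ∀ s, IsChainOn f Y δ (W s) (len s) x x) :
    ∃ u : ℕ → X, (∀ n, u n ∈ Y) ∧ (∀ n, dist (u (n + 1)) (f (u n)) < δ) ∧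
      ∀ N, ∃ s ≥ N, ∀ r < len s, u (s + r) = W s r := by
  refine ⟨fun n => W (blockStart len n) (n - blockStart len n), fun n => ?_, fun n => ?_,
    fun N => ?_⟩
  · exact (hW _).mem _ (by have := lt_blockStart_add hlen n; omega)
  · have hle := blockStart_le len n
    have hlt := lt_blockStart_add hlen n
    set b := blockStart len n
    have hstep := (hW b).dist_lt (n - b) (by omega)
    beta_reduce
    by_cases h : n + 1 = b + len b
    · have hnext : blockStart len (n + 1) = n + 1 := by rw [blockStart, if_pos h]
      rwa [hnext, Nat.sub_self, (hW _).zero, ← (hW b).last, show len b = n - b + 1 by omega]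
    · have hnext : blockStart len (n + 1) = b := by rw [blockStart, if_neg h]
      rwa [hnext, show n + 1 - b = n - b + 1 by omega]
  · obtain ⟨s, hs, hss⟩ := exists_blockStart_eq hlen N
    exact ⟨s, hs, fun r hr => by simp only [blockStart_add hss hr, Nat.add_sub_cancel_left]⟩

end Gluing

section Oscillation

/-- For `P = (v · = 1)` and `Q = (v · = 0)` with `0 ≤ v ≤ 1` this forces the averages of `v` to
be `≥ 1 / (1 + ℓ)` at time `M = s + (s + 1) * ℓ` and `≤ 1 / (3 + 2 * ℓ)` at time
`(3 + 2 * ℓ) * M`, for arbitrarily large `s`. -/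
def Alternates (P Q : ℕ → Prop) (ℓ o : ℕ) : Prop :=
  ∀ N, ∃ s ≥ N, (∀ j ≤ s, P (s + j * ℓ + o)) ∧
    ∀ n ∈ Ico (s + (s + 1) * ℓ) ((3 + 2 * ℓ) * (s + (s + 1) * ℓ)), Q n

variable {P Q P' Q' : ℕ → Prop} {ℓ o : ℕ} {v : ℕ → ℝ}

lemma Alternates.mono (h : Alternates P Q ℓ o) (hP : ∀ n, P n → P' n) (hQ : ∀ n, Q n → Q' n) :
    Alternates P' Q' ℓ o := fun N =>
  let ⟨s, hs, hPs, hQs⟩ := h N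
  ⟨s, hs, fun j hj => hP _ (hPs j hj), fun n hn => hQ n (hQs n hn)⟩

lemma le_sum_range_of_eq_one (hv : ∀ n, 0 ≤ v n) (ho : o < ℓ) {s : ℕ}
    (h1 : ∀ j ≤ s, v (s + j * ℓ + o) = 1) :
    (s + 1 : ℝ) ≤ ∑ i ∈ Finset.range (s + (s + 1) * ℓ), v i := by
  have hinj : InjOn (fun j => s + j * ℓ + o) (Finset.range (s + 1)) := fun i _ j _ hij =>
    Nat.eq_of_mul_eq_mul_right (by omega : 0 < ℓ) (by simpa using hij)
  have hsub : (Finset.range (s + 1)).image (fun j => s + j * ℓ + o) ⊆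
      Finset.range (s + (s + 1) * ℓ) := by
    intro i hi
    obtain ⟨j, hj, rfl⟩ := Finset.mem_image.1 hi
    have : j * ℓ ≤ s * ℓ := Nat.mul_le_mul_right ℓ (by simpa [Nat.lt_succ_iff] using hj)
    rw [Finset.mem_range, add_mul, one_mul]
    omega
  calc (s + 1 : ℝ) = ∑ j ∈ Finset.range (s + 1), v (s + j * ℓ + o) := by
        rw [Finset.sum_congr rfl fun j hj => h1 j (by simpa [Nat.lt_succ_iff] using hj)]
        simp
    _ = ∑ i ∈ (Finset.range (s + 1)).image (fun j => s + j * ℓ + o), v i :=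
        (Finset.sum_image hinj).symm
    _ ≤ ∑ i ∈ Finset.range (s + (s + 1) * ℓ), v i :=
        Finset.sum_le_sum_of_subset_of_nonneg hsub fun i _ _ => hv i

lemma sum_range_le_of_eq_zero (hv : ∀ n, v n ≤ 1) {M N : ℕ} (hMN : M ≤ N)
    (h0 : ∀ n ∈ Ico M N, v n = 0) : ∑ i ∈ Finset.range N, v i ≤ M := by
  rw [← Finset.sum_range_add_sum_Ico v hMN,
    Finset.sum_eq_zero (s := Finset.Ico M N) fun n hn => h0 n (by simpa using hn), add_zero]
  simpa using Finset.sum_le_card_nsmul (Finset.range M) v 1 fun n _ => hv n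

lemma not_exists_tendsto_of_frequently {u : ℕ → ℝ} {a b : ℝ} (hab : a < b)
    (ha : ∃ᶠ n in atTop, u n ≤ a) (hb : ∃ᶠ n in atTop, b ≤ u n) :
    ¬ ∃ c, Tendsto u atTop (𝓝 c) := by
  rintro ⟨c, hc⟩
  rcases lt_or_ge c b with hcb | hbc
  · obtain ⟨n, hbn, hnb⟩ := (hb.and_eventually (hc.eventually (gt_mem_nhds hcb))).exists
    exact hnb.not_ge hbn
  · obtain ⟨n, han, hna⟩ :=
      (ha.and_eventually (hc.eventually (lt_mem_nhds (hab.trans_le hbc)))).exists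
    exact hna.not_ge han

theorem Alternates.not_exists_tendsto_average (hv : ∀ n, v n ∈ Icc 0 1) (ho : o < ℓ)
    (h : Alternates (v · = 1) (v · = 0) ℓ o) :
    ¬ ∃ c, Tendsto (fun n : ℕ => (∑ i ∈ Finset.range n, v i) / n) atTop (𝓝 c) := by
  have hℓ : 0 < ℓ := by omega
  have hMpos : ∀ s, 0 < s + (s + 1) * ℓ := fun s => by positivity
  refine not_exists_tendsto_of_frequently (a := 1 / (3 + 2 * ℓ)) (b := 1 / (1 + ℓ))
    (one_div_lt_one_div_of_lt (by positivity) (by linarith)) ?_ ?_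
  · refine frequently_atTop.2 fun N => ?_
    obtain ⟨s, hs, -, h0⟩ := h N
    have hsum := sum_range_le_of_eq_zero (fun n => (hv n).2)
      (Nat.le_mul_of_pos_left _ (by omega)) h0
    have hM : (0 : ℝ) < (s + (s + 1) * ℓ : ℕ) := by exact_mod_cast hMpos s
    refine ⟨(3 + 2 * ℓ) * (s + (s + 1) * ℓ),
      hs.trans ((Nat.le_add_right s _).trans (Nat.le_mul_of_pos_left _ (by omega))), ?_⟩
    rw [Nat.cast_mul, div_le_div_iff₀ (mul_pos (by positivity) hM) (by positivity)]
    push_cast at hsum ⊢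
    nlinarith
  · refine frequently_atTop.2 fun N => ?_
    obtain ⟨s, hs, h1, -⟩ := h N
    have hsum := le_sum_range_of_eq_one (fun n => (hv n).1) ho h1
    refine ⟨s + (s + 1) * ℓ, hs.trans (Nat.le_add_right _ _), ?_⟩
    rw [div_le_div_iff₀ (by positivity) (by exact_mod_cast hMpos s)]
    push_cast
    nlinarith

end Oscillation

section IrregularPoint

variable {X : Type*} [MetricSpace X] {f : X → X} {Y : Set X}

theorem exists_pseudoOrbit_alternates (hf : Continuous f) (hY : f '' Y = Y) (htr : TransOn f Y)
    {p z : X} (hp : p ∈ Y) (hz : z ∈ Y) {m : ℕ} (hm : 0 < m) (hpm : f^[m] p = p)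
    {δ : ℝ} (hδ : 0 < δ) :
    ∃ ℓ o, o < ℓ ∧ ∃ u : ℕ → X, (∀ n, u n ∈ Y) ∧ (∀ n, dist (u (n + 1)) (f (u n)) < δ) ∧
      Alternates (u · = z) (u · ∈ range fun i => f^[i] p) ℓ o := by
  have hmaps : MapsTo f Y Y := mapsTo_iff_image_subset.2 hY.subset
  obtain ⟨ℓ₁, hℓ₁, c₁, hc₁⟩ := htr.exists_isChainOn hf hY hδ hp hz
  obtain ⟨ℓ₂, hℓ₂, c₂, hc₂⟩ := htr.exists_isChainOn hf hY hδ hz hp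
  set ℓ := ℓ₁ + ℓ₂
  set loop := fun i => if i < ℓ₁ then c₁ i else c₂ (i - ℓ₁)
  have hloop : IsChainOn f Y δ loop ℓ p p := hc₁.append hc₂
  have hloop_z : loop ℓ₁ = z := by simp [loop, hc₂.zero]
  -- in the block starting at time `s`: `s + 1` turns of `loop`, then `b s` turns of the orbit
  set b := fun s => 2 * (1 + ℓ) * (s + (s + 1) * ℓ)
  have horbit (s : ℕ) : IsChainOn f Y δ (fun i => f^[i] p) (b s * m) p p := by
    simpa [(Function.IsPeriodicPt.const_mul hpm (b s)).eq] using
      isChainOn_iterate hmaps hδ hp (b s * m)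
  obtain ⟨u, hu, hstep, hblock⟩ := exists_pseudoOrbit_of_isChainOn
    (len := fun s => (s + 1) * ℓ + b s * m) (fun s => by positivity)
    (fun s => (hloop.repeat (by omega) (s + 1)).append (horbit s))
  refine ⟨ℓ, ℓ₁, by omega, u, hu, hstep, fun N => ?_⟩
  obtain ⟨s, hs, hus⟩ := hblock N
  refine ⟨s, hs, fun j hj => ?_, fun n hn => ?_⟩
  · have hjs : j * ℓ ≤ s * ℓ := Nat.mul_le_mul_right ℓ hj
    have hlt : j * ℓ + ℓ₁ < (s + 1) * ℓ := by rw [add_mul, one_mul]; omega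
    show u (s + j * ℓ + ℓ₁) = z
    rw [add_assoc, hus _ (by omega), if_pos hlt, mul_comm j ℓ, Nat.mul_add_mod,
      Nat.mod_eq_of_lt (by omega), hloop_z]
  · obtain ⟨hMn, hnN⟩ := mem_Ico.1 hn
    have hb : b s ≤ b s * m := Nat.le_mul_of_pos_right _ hm
    have hsplit : (3 + 2 * ℓ) * (s + (s + 1) * ℓ) = s + (s + 1) * ℓ + b s := by
      simp only [b]; ring
    have hlen : n - s < (s + 1) * ℓ + b s * m := by omega
    have hun := hus (n - s) hlen
    rw [Nat.add_sub_cancel' (by omega), if_neg (by omega)] at hun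
    exact ⟨_, hun.symm⟩

lemma exists_continuous_zero_near_one_near {O : Set X} (hO : IsClosed O) (hOne : O.Nonempty)
    {z : X} (hz : z ∉ O) : ∃ R > 0, ∃ g : C(X, ℝ), (∀ x, g x ∈ Icc 0 1) ∧
      (∀ x, infDist x O ≤ R → g x = 0) ∧ ∀ x, dist x z ≤ R → g x = 1 := by
  have hpos := (hO.notMem_iff_infDist_pos hOne).1 hz
  have hdisj : Disjoint {x | infDist x O ≤ infDist z O / 3} (closedBall z (infDist z O / 3)) := by
    refine Set.disjoint_left.2 fun x hxO hxz => ?_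
    have := infDist_le_infDist_add_dist (s := O) (x := z) (y := x)
    rw [mem_closedBall, dist_comm] at hxz
    rw [mem_ofPred_eq] at hxO
    linarith
  obtain ⟨g, hg0, hg1, hg⟩ := exists_continuous_zero_one_of_isClosed
    (isClosed_le (continuous_infDist_pt O) continuous_const) isClosed_closedBall hdisj
  exact ⟨infDist z O / 3, by positivity, g, hg, fun x hx => hg0 hx, fun x hx => hg1 hx⟩

theorem exists_mem_irreg_of_shadowOn (hf : Continuous f) (hY : f '' Y = Y)
    (hsh : ShadowOn f Y) (htr : TransOn f Y) {p : X} (hp : p ∈ Y) {m : ℕ} (hm : 0 < m)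
    (hpm : f^[m] p = p) (hnot : ¬ IsPeriodicOrbit f Y) :
    ∃ g : C(X, ℝ), ∃ y ∈ Y, y ∈ irreg f g := by
  set O := range fun i => f^[i] p
  have hOfin : O.Finite := ((finite_Iio m).image fun i => f^[i] p).subset <|
    range_subset_iff.2 fun n =>
      ⟨n % m, Nat.mod_lt n hm, Function.IsPeriodicPt.iterate_mod_apply hpm n⟩
  have hOY : O ⊆ Y :=
    range_subset_iff.2 fun i => (mapsTo_iff_image_subset.2 hY.subset).iterate i hp
  obtain ⟨z, hzY, hzO⟩ : ∃ z ∈ Y, z ∉ O := by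
    by_contra! h
    exact hnot ⟨p, ⟨m, hm, hpm⟩, Subset.antisymm h hOY⟩
  obtain ⟨R, hR, g, hg, hg0, hg1⟩ :=
    exists_continuous_zero_near_one_near hOfin.isClosed ⟨p, 0, rfl⟩ hzO
  obtain ⟨δ, hδ, hshad⟩ := hsh R hR
  obtain ⟨ℓ, o, ho, u, hu, hstep, halt⟩ :=
    exists_pseudoOrbit_alternates hf hY htr hp hzY hm hpm hδ
  obtain ⟨y, hy, hyu⟩ := hshad u hu hstep
  refine ⟨g, y, hy, (halt.mono (fun n hn => ?_) fun n hn => ?_).not_exists_tendsto_average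
    (fun n => hg (f^[n] y)) ho⟩
  · exact hg1 _ (by rw [← hn]; exact (hyu n).le)
  · exact hg0 _ ((infDist_le_dist_of_mem hn).trans (hyu n).le)

end IrregularPoint

theorem irregular_observables_open_dense_general
    {X : Type*} [MetricSpace X] [CompactSpace X]
    (f : X → X) (hf : Continuous f)
    (Xs : ℕ → Set X)
    (hXinv : ∀ n, f '' Xs n = Xs n)
    (hXmono : Monotone Xs)
    (hper : ∃ x ∈ Xs 0, ∃ m : ℕ, 0 < m ∧ f^[m] x = x)
    (hshadow : ∀ n, ShadowOn f (Xs n))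
    (htrans : ∀ n, TransOn f (Xs n))
    (n₀ : ℕ) (hnotper : ¬ IsPeriodicOrbit f (Xs n₀)) :
    IsOpen {φ : C(X, ℝ) | (irreg f ⇑φ ∩ Xs n₀).Nonempty} ∧
      Dense {φ : C(X, ℝ) | (irreg f ⇑φ ∩ Xs n₀).Nonempty} := by
  obtain ⟨p, hp, m, hm, hpm⟩ := hper
  obtain ⟨g, y, hy, hyg⟩ := exists_mem_irreg_of_shadowOn hf (hXinv n₀) (hshadow n₀) (htrans n₀)
    (hXmono (Nat.zero_le n₀) hp) hm hpm hnotper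
  exact ⟨isOpen_setOf_irreg_inter_nonempty f (Xs n₀), dense_setOf_irreg_inter_nonempty hy hyg⟩

/-- Theorem: the continuous functions whose irregular set meets a non-periodic
subsystem `X_{n₀}` with uniform separation form an open dense subset of `C(X,ℝ)`. -/
theorem irregular_observables_open_dense
    {X : Type*} [MetricSpace X] [CompactSpace X] [Nontrivial X]
    [MeasurableSpace X] [BorelSpace X]
    (f : X → X) (hf : Continuous f) (hbij : Function.Bijective f)
    (Xs : ℕ → Set X)
    (hXcomp : ∀ n, IsCompact (Xs n))
    (hXinv : ∀ n, f '' Xs n = Xs n)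
    (hXmono : Monotone Xs)
    (hXdense : closure (⋃ n, Xs n) = Set.univ)
    (hper : ∃ x ∈ Xs 0, ∃ m : ℕ, 0 < m ∧ f^[m] x = x)
    (hshadow : ∀ n, ShadowOn f (Xs n))
    (htrans : ∀ n, TransOn f (Xs n))
    (n₀ : ℕ) (hnotper : ¬ IsPeriodicOrbit f (Xs n₀))
    (hus : UnifSepOn f (Xs n₀)) :
    IsOpen {φ : C(X, ℝ) | (irreg f ⇑φ ∩ Xs n₀).Nonempty} ∧
      Dense {φ : C(X, ℝ) | (irreg f ⇑φ ∩ Xs n₀).Nonempty} :=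
  irregular_observables_open_dense_general f hf Xs hXinv hXmono hper hshadow htrans n₀ hnotper
end

section
/- Let (X,f) be a dynamical system with a nondecreasing sequence of f-invariant compact subsets X_1 ⊆ X_2 ⊆ … ⊆ X such that the closure of ∪_{n≥1} X_n equals X. Let μ ∈ M_f(X) satisfy μ(∪_{n≥1} X_n) = 1, and for each n with μ(X_n) > 0 define μ_n as the normalized restriction of μ to X_n, i.e. μ_n(A) = μ(A ∩ X_n)/μ(X_n). Then μ_n is an invariant measure of the subsystem (X_n, f|_{X_n}), μ_n converges to μ in the weak* topology as n → ∞, and h_{μ_n}(f) → h_μ(f) as n → ∞. -/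
set_option linter.unusedSectionVars false

open MeasureTheory Filter Set Topology ENNReal

/-!
Write `μ = α ν + (1 - α) ρ` with `α = μ Xₙ`, `ν = μ[|Xₙ]` and `ρ = μ[|Xₙᶜ]`. Since `Xₙ` is
forward invariant and `μ` is invariant, `f⁻¹ Xₙ = Xₙ` up to a `μ`-null set, so `ν` and `ρ` are
invariant too. Fix a partition `ξ` into `m` sets. On every refinement `ξⁿ = ξ ∨ … ∨ f⁻ⁿ⁺¹ξ`,
concavity of `x ↦ -x log x` gives `α H_ν(ξⁿ) ≤ H_μ(ξⁿ)`, and its subadditivity gives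
`H_μ(ξⁿ) ≤ α H_ν(ξⁿ) + (1 - α) H_ρ(ξⁿ) + H(α, 1 - α)`. Dividing by `n` (the entropy of `ξ` is both
the infimum and, by Fekete's lemma, the limit of `H(ξⁿ)/n`) yields `h(ν) ≤ h(μ)/α` and
`h_μ(ξ) ≤ h(ν) + (1 - α) m`. As `α → 1` these squeeze `h(ν)` to `h(μ)`. The weak* convergence
holds because `μ[|Xₙ]` differs from `μ` only through the vanishing mass `μ Xₙᶜ`.
-/

open Function ProbabilityTheory

namespace Real

lemma negMulLog_add_le {s t : ℝ} (hs : 0 ≤ s) (ht : 0 ≤ t) :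
    negMulLog (s + t) ≤ negMulLog s + negMulLog t := by
  rcases hs.eq_or_lt with rfl | hs
  · simp
  rcases ht.eq_or_lt with rfl | ht
  · simp
  have hls : log s ≤ log (s + t) := log_le_log hs (by linarith)
  have hlt : log t ≤ log (s + t) := log_le_log ht (by linarith)
  simp only [negMulLog, neg_mul]
  nlinarith

lemma mul_negMulLog_le_negMulLog_mix {α x y : ℝ} (hα₀ : 0 ≤ α) (hα₁ : α ≤ 1) (hx : 0 ≤ x)
    (hy₀ : 0 ≤ y) (hy₁ : y ≤ 1) :
    α * negMulLog x ≤ negMulLog (α * x + (1 - α) * y) := by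
  have hconc := concaveOn_negMulLog.2 (mem_Ici.2 hx) (mem_Ici.2 hy₀) hα₀ (sub_nonneg.2 hα₁)
    (add_sub_cancel α 1)
  simp only [smul_eq_mul] at hconc
  nlinarith [negMulLog_nonneg hy₀ hy₁]

lemma negMulLog_mix_le {α x y : ℝ} (hα₀ : 0 ≤ α) (hα₁ : α ≤ 1) (hx : 0 ≤ x) (hy : 0 ≤ y) :
    negMulLog (α * x + (1 - α) * y) ≤
      α * negMulLog x + (1 - α) * negMulLog y + (x * negMulLog α + y * negMulLog (1 - α)) := by
  calc negMulLog (α * x + (1 - α) * y)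
      ≤ negMulLog (α * x) + negMulLog ((1 - α) * y) :=
        negMulLog_add_le (by positivity) (mul_nonneg (by linarith) hy)
    _ = _ := by rw [negMulLog_mul, negMulLog_mul]; ring

lemma sum_sum_negMulLog_le {ι κ : Type*} [Fintype ι] [Fintype κ] (q : ι → κ → ℝ)
    (hq : ∀ i k, 0 ≤ q i k) (hq₁ : ∑ i, ∑ k, q i k ≤ 1) :
    ∑ i, ∑ k, negMulLog (q i k) ≤
      ∑ i, negMulLog (∑ k, q i k) + ∑ k, negMulLog (∑ i, q i k) := by
  set p : ι → ℝ := fun i => ∑ k, q i k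
  set r : κ → ℝ := fun k => ∑ i, q i k
  -- Gibbs' inequality term by term: `log y ≤ y - 1` at `y = p i * r k / q i k`.
  have gibbs : ∀ i k, negMulLog (q i k) ≤
      q i k * -log (p i) + q i k * -log (r k) + (p i * r k - q i k) := by
    intro i k
    have hqp : q i k ≤ p i := Finset.single_le_sum (fun k _ => hq i k) (Finset.mem_univ k)
    have hqr : q i k ≤ r k := Finset.single_le_sum (fun i _ => hq i k) (Finset.mem_univ i)
    rcases (hq i k).eq_or_lt with h | h
    · rw [← h, negMulLog_zero]
      nlinarith [hq i k]
    have key := log_le_sub_one_of_pos (show 0 < p i * r k / q i k by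
      have := h.trans_le hqp; have := h.trans_le hqr; positivity)
    rw [log_div (by nlinarith) h.ne', log_mul (by linarith) (by linarith)] at key
    have hmul := mul_le_mul_of_nonneg_left key h.le
    have hcancel : q i k * (p i * r k / q i k) = p i * r k := mul_div_cancel₀ _ h.ne'
    simp only [negMulLog, neg_mul]
    nlinarith
  have hS : ∑ i, ∑ k, p i * r k = (∑ i, ∑ k, q i k) ^ 2 := by
    rw [← Finset.sum_mul_sum, sq]
    congr 1
    exact Finset.sum_comm
  have hpi : ∑ i, ∑ k, q i k * -log (p i) = ∑ i, negMulLog (p i) :=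
    Finset.sum_congr rfl fun i _ => by rw [← Finset.sum_mul, negMulLog]; ring
  have hrk : ∑ i, ∑ k, q i k * -log (r k) = ∑ k, negMulLog (r k) := by
    rw [Finset.sum_comm]
    exact Finset.sum_congr rfl fun k _ => by rw [← Finset.sum_mul, negMulLog]; ring
  calc ∑ i, ∑ k, negMulLog (q i k)
      ≤ ∑ i, ∑ k, (q i k * -log (p i) + q i k * -log (r k) + (p i * r k - q i k)) :=
        Finset.sum_le_sum fun i _ => Finset.sum_le_sum fun k _ => gibbs i k
    _ = ∑ i, negMulLog (p i) + ∑ k, negMulLog (r k) +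
          ((∑ i, ∑ k, q i k) ^ 2 - ∑ i, ∑ k, q i k) := by
        simp only [Finset.sum_add_distrib, Finset.sum_sub_distrib, hS, hpi, hrk]
    _ ≤ ∑ i, negMulLog (p i) + ∑ k, negMulLog (r k) := by
        nlinarith [Finset.sum_nonneg fun i (_ : i ∈ Finset.univ) =>
          Finset.sum_nonneg fun k (_ : k ∈ Finset.univ) => hq i k]

end Real

section Partition

variable {X : Type*} [MeasurableSpace X]

def IsMeasurablePartition {ι : Type*} (A : ι → Set X) : Prop :=
  (∀ i, MeasurableSet (A i)) ∧ Pairwise (Disjoint on A) ∧ ⋃ i, A i = univ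

namespace IsMeasurablePartition

variable {ι : Type*} {A : ι → Set X}

lemma preimage {Y : Type*} [MeasurableSpace Y] {f : Y → X} (hA : IsMeasurablePartition A)
    (hf : Measurable f) : IsMeasurablePartition fun i => f ⁻¹' A i :=
  ⟨fun i => hf (hA.1 i), fun _ _ hij => (hA.2.1 hij).preimage f, by
    rw [← preimage_iUnion, hA.2.2, preimage_univ]⟩

lemma iInter_pi {κ : ι → Type*} [Countable ι] {P : ∀ i, κ i → Set X}
    (hP : ∀ i, IsMeasurablePartition (P i)) :
    IsMeasurablePartition fun c : (∀ i, κ i) => ⋂ i, P i (c i) := by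
  refine ⟨fun c => .iInter fun i => (hP i).1 (c i), fun c c' hcc' => ?_, ?_⟩
  · obtain ⟨i, hi⟩ := Function.ne_iff.1 hcc'
    exact ((hP i).2.1 hi).mono (iInter_subset _ i) (iInter_subset _ i)
  · refine eq_univ_of_forall fun x => ?_
    choose c hc using fun i => mem_iUnion.1 ((hP i).2.2.symm ▸ mem_univ x : x ∈ ⋃ j, P i j)
    exact mem_iUnion.2 ⟨c, mem_iInter.2 hc⟩

lemma sum_measureReal_inter [Fintype ι] (hA : IsMeasurablePartition A) (μ : Measure X)
    [IsFiniteMeasure μ] (s : Set X) : ∑ i, μ.real (A i ∩ s) = μ.real s := by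
  have h := measureReal_iUnion_fintype (μ := μ.restrict s) hA.2.1 hA.1 fun _ => measure_ne_top _ _
  simpa [hA.2.2, Measure.real, Measure.restrict_apply (hA.1 _)] using h.symm

lemma sum_measureReal [Fintype ι] (hA : IsMeasurablePartition A) (μ : Measure X)
    [IsFiniteMeasure μ] : ∑ i, μ.real (A i) = μ.real univ := by
  simpa using hA.sum_measureReal_inter μ univ

end IsMeasurablePartition

end Partition

section Entropy

variable {X : Type*} [MeasurableSpace X] {f : X → X}

lemma partInfo_nonneg {ι : Type} [Fintype ι] (μ : Measure X) [IsZeroOrProbabilityMeasure μ]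
    (A : ι → Set X) : 0 ≤ partInfo μ A :=
  Finset.sum_nonneg fun _ _ => Real.negMulLog_nonneg measureReal_nonneg measureReal_le_one

lemma partInfo_le_card {ι : Type} [Fintype ι] (μ : Measure X) [IsZeroOrProbabilityMeasure μ]
    (A : ι → Set X) : partInfo μ A ≤ Fintype.card ι := by
  calc partInfo μ A ≤ ∑ _i : ι, (1 : ℝ) := Finset.sum_le_sum fun i _ =>
        (Real.negMulLog_le_one_sub_self measureReal_nonneg).trans
          (sub_le_self _ measureReal_nonneg)
    _ = Fintype.card ι := by simp

lemma IsFinPartition.isMeasurablePartition_iterJoin {m : ℕ} {ξ : Fin m → Set X}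
    (hξ : IsFinPartition ξ) (hf : Measurable f) (n : ℕ) :
    IsMeasurablePartition (iterJoin f ξ n) :=
  IsMeasurablePartition.iInter_pi (P := fun (i : Fin n) j => f^[i] ⁻¹' ξ j) fun i =>
    IsMeasurablePartition.preimage (A := ξ) hξ (hf.iterate i)

lemma iterJoin_add (f : X → X) {m : ℕ} (ξ : Fin m → Set X) (N M : ℕ)
    (c₁ : Fin N → Fin m) (c₂ : Fin M → Fin m) :
    iterJoin f ξ (N + M) (Sum.elim c₁ c₂ ∘ finSumFinEquiv.symm) =
      iterJoin f ξ N c₁ ∩ f^[N] ⁻¹' iterJoin f ξ M c₂ := by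
  ext x
  simp only [iterJoin, mem_iInter, mem_inter_iff, mem_preimage, ← iterate_add_apply]
  rw [← finSumFinEquiv.forall_congr_right, Sum.forall]
  simp [add_comm]

lemma partInfo_iterJoin_add (μ : Measure X) {m : ℕ} (ξ : Fin m → Set X) (N M : ℕ) :
    partInfo μ (iterJoin f ξ (N + M)) =
      ∑ c₁, ∑ c₂, Real.negMulLog (μ.real (iterJoin f ξ N c₁ ∩ f^[N] ⁻¹' iterJoin f ξ M c₂)) := by
  let e : (Fin N → Fin m) × (Fin M → Fin m) ≃ (Fin (N + M) → Fin m) :=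
    (Equiv.sumArrowEquivProdArrow _ _ _).symm.trans (finSumFinEquiv.arrowCongr (.refl _))
  have he : ∀ c₁ c₂, e (c₁, c₂) = Sum.elim c₁ c₂ ∘ finSumFinEquiv.symm := fun _ _ => rfl
  rw [partInfo, ← e.sum_comp, Fintype.sum_prod_type]
  simp only [he, iterJoin_add]
  rfl

lemma subadditive_partInfo_iterJoin {μ : Measure X} [IsZeroOrProbabilityMeasure μ]
    (hf : MeasurePreserving f μ μ) {m : ℕ} {ξ : Fin m → Set X} (hξ : IsFinPartition ξ) :
    Subadditive fun n => partInfo μ (iterJoin f ξ n) := by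
  intro N M
  dsimp only
  have hA := hξ.isMeasurablePartition_iterJoin hf.measurable N
  have hB := hξ.isMeasurablePartition_iterJoin hf.measurable M
  have hB' := hB.preimage (hf.measurable.iterate N)
  set A := iterJoin f ξ N
  set B := iterJoin f ξ M
  have row : ∀ c₁, ∑ c₂, μ.real (A c₁ ∩ f^[N] ⁻¹' B c₂) = μ.real (A c₁) := fun c₁ => by
    simpa only [inter_comm] using hB'.sum_measureReal_inter μ (A c₁)
  have col : ∀ c₂, ∑ c₁, μ.real (A c₁ ∩ f^[N] ⁻¹' B c₂) = μ.real (B c₂) := fun c₂ => by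
    rw [hA.sum_measureReal_inter, (hf.iterate N).measureReal_preimage (hB.1 c₂).nullMeasurableSet]
  have total : ∑ c₁, ∑ c₂, μ.real (A c₁ ∩ f^[N] ⁻¹' B c₂) ≤ 1 := by
    simp only [row, hA.sum_measureReal]
    exact measureReal_le_one
  rw [partInfo_iterJoin_add]
  refine (Real.sum_sum_negMulLog_le _ (fun _ _ => measureReal_nonneg) total).trans_eq ?_
  simp only [row, col]
  rfl

lemma bddBelow_partInfo_iterJoin_div (μ : Measure X) [IsZeroOrProbabilityMeasure μ] {m : ℕ}
    (ξ : Fin m → Set X) :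
    BddBelow (range fun n : ℕ => partInfo μ (iterJoin f ξ (n + 1)) / (n + 1)) :=
  ⟨0, forall_mem_range.2 fun _ => div_nonneg (partInfo_nonneg μ _) (by positivity)⟩

lemma tendsto_entOfPart {μ : Measure X} [IsZeroOrProbabilityMeasure μ]
    (hf : MeasurePreserving f μ μ) {m : ℕ} {ξ : Fin m → Set X} (hξ : IsFinPartition ξ) :
    Tendsto (fun n : ℕ => partInfo μ (iterJoin f ξ (n + 1)) / (n + 1)) atTop
      (𝓝 (entOfPart f μ ξ)) := by
  have hsub := subadditive_partInfo_iterJoin hf hξ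
  have hbdd : BddBelow (range fun n : ℕ => partInfo μ (iterJoin f ξ n) / n) :=
    ⟨0, forall_mem_range.2 fun n => div_nonneg (partInfo_nonneg μ _) n.cast_nonneg⟩
  have hlim := (hsub.tendsto_lim hbdd).comp (tendsto_add_atTop_nat 1)
  simp only [comp_def, Nat.cast_add, Nat.cast_one] at hlim
  convert hlim using 2
  -- Fekete: the limit of `u n / n` is also its infimum.
  refine le_antisymm
    (ge_of_tendsto hlim (.of_forall (ciInf_le (bddBelow_partInfo_iterJoin_div μ ξ)))) ?_
  exact le_ciInf fun n => by
    simpa only [Nat.succ_eq_add_one, Nat.cast_add, Nat.cast_one] using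
      hsub.lim_le_div hbdd n.succ_ne_zero

lemma entOfPart_nonneg (μ : Measure X) [IsZeroOrProbabilityMeasure μ] {m : ℕ}
    (ξ : Fin m → Set X) : 0 ≤ entOfPart f μ ξ :=
  Real.iInf_nonneg fun _ => div_nonneg (partInfo_nonneg μ _) (by positivity)

lemma entOfPart_le_card (μ : Measure X) [IsZeroOrProbabilityMeasure μ] {m : ℕ}
    (ξ : Fin m → Set X) : entOfPart f μ ξ ≤ m := by
  calc entOfPart f μ ξ ≤ partInfo μ (iterJoin f ξ (0 + 1)) / ((0 : ℕ) + 1) :=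
        ciInf_le (bddBelow_partInfo_iterJoin_div μ ξ) 0
    _ ≤ Fintype.card (Fin 1 → Fin m) := by simpa using partInfo_le_card μ (iterJoin f ξ 1)
    _ = m := by simp

lemma ofReal_entOfPart_le_msEntropy (μ : Measure X) {m : ℕ} {ξ : Fin m → Set X}
    (hξ : IsFinPartition ξ) : ENNReal.ofReal (entOfPart f μ ξ) ≤ msEntropy f μ :=
  le_iSup₂_of_le m ξ (le_iSup_of_le hξ le_rfl)

end Entropy

section Mixture

variable {X : Type*} [MeasurableSpace X] {f : X → X} {μ ν ρ : Measure X} {α : ℝ}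

lemma mul_partInfo_le_of_mix [IsZeroOrProbabilityMeasure ρ] (hα₀ : 0 ≤ α) (hα₁ : α ≤ 1)
    (hmix : ∀ t, MeasurableSet t → μ.real t = α * ν.real t + (1 - α) * ρ.real t)
    {ι : Type} [Fintype ι] {A : ι → Set X} (hA : ∀ i, MeasurableSet (A i)) :
    α * partInfo ν A ≤ partInfo μ A := by
  show α * ∑ i, Real.negMulLog (ν.real (A i)) ≤ ∑ i, Real.negMulLog (μ.real (A i))
  rw [Finset.mul_sum]
  refine Finset.sum_le_sum fun i _ => ?_
  rw [hmix _ (hA i)]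
  exact Real.mul_negMulLog_le_negMulLog_mix hα₀ hα₁ measureReal_nonneg measureReal_nonneg
    measureReal_le_one

lemma partInfo_le_of_mix [IsZeroOrProbabilityMeasure ν] [IsZeroOrProbabilityMeasure ρ]
    (hα₀ : 0 ≤ α) (hα₁ : α ≤ 1)
    (hmix : ∀ t, MeasurableSet t → μ.real t = α * ν.real t + (1 - α) * ρ.real t)
    {ι : Type} [Fintype ι] {A : ι → Set X} (hA : IsMeasurablePartition A) :
    partInfo μ A ≤ α * partInfo ν A + (1 - α) * partInfo ρ A +
      (Real.negMulLog α + Real.negMulLog (1 - α)) := by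
  show ∑ i, Real.negMulLog (μ.real (A i)) ≤ α * ∑ i, Real.negMulLog (ν.real (A i)) +
    (1 - α) * ∑ i, Real.negMulLog (ρ.real (A i)) + _
  have hν : (∑ i, ν.real (A i)) * Real.negMulLog α ≤ Real.negMulLog α :=
    mul_le_of_le_one_left (Real.negMulLog_nonneg hα₀ hα₁)
      (hA.sum_measureReal ν ▸ measureReal_le_one)
  have hρ : (∑ i, ρ.real (A i)) * Real.negMulLog (1 - α) ≤ Real.negMulLog (1 - α) :=
    mul_le_of_le_one_left (Real.negMulLog_nonneg (by linarith) (by linarith))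
      (hA.sum_measureReal ρ ▸ measureReal_le_one)
  calc ∑ i, Real.negMulLog (μ.real (A i))
      ≤ ∑ i, (α * Real.negMulLog (ν.real (A i)) + (1 - α) * Real.negMulLog (ρ.real (A i)) +
          (ν.real (A i) * Real.negMulLog α + ρ.real (A i) * Real.negMulLog (1 - α))) :=
        Finset.sum_le_sum fun i _ => (hmix _ (hA.1 i)).symm ▸
          Real.negMulLog_mix_le hα₀ hα₁ measureReal_nonneg measureReal_nonneg
    _ = α * ∑ i, Real.negMulLog (ν.real (A i)) + (1 - α) * ∑ i, Real.negMulLog (ρ.real (A i)) +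
          ((∑ i, ν.real (A i)) * Real.negMulLog α +
            (∑ i, ρ.real (A i)) * Real.negMulLog (1 - α)) := by
        simp only [Finset.sum_add_distrib, ← Finset.mul_sum, ← Finset.sum_mul]
    _ ≤ _ := by gcongr

lemma mul_entOfPart_le_of_mix [IsZeroOrProbabilityMeasure ν] [IsZeroOrProbabilityMeasure ρ]
    (hf : Measurable f) (hα₀ : 0 ≤ α) (hα₁ : α ≤ 1)
    (hmix : ∀ t, MeasurableSet t → μ.real t = α * ν.real t + (1 - α) * ρ.real t)
    {m : ℕ} {ξ : Fin m → Set X} (hξ : IsFinPartition ξ) :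
    α * entOfPart f ν ξ ≤ entOfPart f μ ξ := by
  refine le_ciInf fun n => ?_
  calc α * entOfPart f ν ξ ≤ α * (partInfo ν (iterJoin f ξ (n + 1)) / (n + 1)) :=
        mul_le_mul_of_nonneg_left (ciInf_le (bddBelow_partInfo_iterJoin_div ν ξ) n) hα₀
    _ = α * partInfo ν (iterJoin f ξ (n + 1)) / (n + 1) := (mul_div_assoc ..).symm
    _ ≤ partInfo μ (iterJoin f ξ (n + 1)) / (n + 1) := by
        gcongr
        exact mul_partInfo_le_of_mix hα₀ hα₁ hmix (hξ.isMeasurablePartition_iterJoin hf _).1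

lemma entOfPart_le_of_mix [IsZeroOrProbabilityMeasure μ] [IsZeroOrProbabilityMeasure ν]
    [IsZeroOrProbabilityMeasure ρ] (hμ : MeasurePreserving f μ μ)
    (hν : MeasurePreserving f ν ν) (hρ : MeasurePreserving f ρ ρ) (hα₀ : 0 ≤ α) (hα₁ : α ≤ 1)
    (hmix : ∀ t, MeasurableSet t → μ.real t = α * ν.real t + (1 - α) * ρ.real t)
    {m : ℕ} {ξ : Fin m → Set X} (hξ : IsFinPartition ξ) :
    entOfPart f μ ξ ≤ α * entOfPart f ν ξ + (1 - α) * entOfPart f ρ ξ := by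
  set C := Real.negMulLog α + Real.negMulLog (1 - α)
  have hC : Tendsto (fun n : ℕ => C / (n + 1)) atTop (𝓝 0) := by
    simpa only [mul_one_div, mul_zero] using tendsto_one_div_add_atTop_nhds_zero_nat.const_mul C
  have hlim := (((tendsto_entOfPart hν hξ).const_mul α).add
    ((tendsto_entOfPart hρ hξ).const_mul (1 - α))).add hC
  rw [add_zero] at hlim
  refine le_of_tendsto_of_tendsto' (tendsto_entOfPart hμ hξ) hlim fun n => ?_
  calc partInfo μ (iterJoin f ξ (n + 1)) / (n + 1)
      ≤ (α * partInfo ν (iterJoin f ξ (n + 1)) + (1 - α) * partInfo ρ (iterJoin f ξ (n + 1)) +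
          C) / (n + 1) := by
        gcongr
        exact partInfo_le_of_mix hα₀ hα₁ hmix (hξ.isMeasurablePartition_iterJoin hμ.measurable _)
    _ = _ := by ring

end Mixture

section Conditioning

variable {X : Type*} [MeasurableSpace X] {f : X → X} {μ : Measure X} {s : Set X}

lemma MeasureTheory.MeasurePreserving.preimage_ae_eq_of_mapsTo [IsFiniteMeasure μ]
    (hf : MeasurePreserving f μ μ) (hs : MeasurableSet s) (hfs : MapsTo f s s) :
    f ⁻¹' s =ᵐ[μ] s :=
  (ae_eq_of_subset_of_measure_ge hfs (hf.measure_preimage hs.nullMeasurableSet).le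
    hs.nullMeasurableSet (measure_ne_top μ _)).symm

lemma MeasureTheory.MeasurePreserving.cond (hf : MeasurePreserving f μ μ) (hs : MeasurableSet s)
    (hfs : f ⁻¹' s =ᵐ[μ] s) : MeasurePreserving f μ[|s] μ[|s] := by
  have h := hf.restrict_preimage hs
  rw [Measure.restrict_congr_set hfs] at h
  exact h.smul_measure _

lemma measureReal_eq_cond_add_cond_compl [IsProbabilityMeasure μ] (hs : MeasurableSet s)
    (t : Set X) : μ.real t = μ.real s * μ[|s].real t + (1 - μ.real s) * μ[|sᶜ].real t := by
  rw [← probReal_compl_eq_one_sub hs, measureReal_def, ← cond_add_cond_compl_eq hs μ,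
    ENNReal.toReal_add (by finiteness) (by finiteness), ENNReal.toReal_mul, ENNReal.toReal_mul]
  simp only [measureReal_def, mul_comm]

variable [IsProbabilityMeasure μ]

lemma msEntropy_cond_le (hf : Measurable f) (hs : MeasurableSet s) (hμs : μ s ≠ 0) :
    msEntropy f μ[|s] ≤ msEntropy f μ / μ s := by
  refine iSup₂_le fun m ξ => iSup_le fun hξ => ?_
  have hα : 0 < μ.real s := ENNReal.toReal_pos hμs (measure_ne_top μ s)
  have h := mul_entOfPart_le_of_mix hf hα.le measureReal_le_one
    (fun t _ => measureReal_eq_cond_add_cond_compl hs t) hξ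
  calc ENNReal.ofReal (entOfPart f μ[|s] ξ)
      ≤ ENNReal.ofReal (entOfPart f μ ξ / μ.real s) := ofReal_le_ofReal ((le_div_iff₀' hα).2 h)
    _ = ENNReal.ofReal (entOfPart f μ ξ) / μ s := by rw [ofReal_div_of_pos hα, ofReal_measureReal]
    _ ≤ msEntropy f μ / μ s := by gcongr; exact ofReal_entOfPart_le_msEntropy μ hξ

lemma ofReal_entOfPart_le_msEntropy_cond_add (hf : MeasurePreserving f μ μ)
    (hs : MeasurableSet s) (hfs : f ⁻¹' s =ᵐ[μ] s) {m : ℕ} {ξ : Fin m → Set X}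
    (hξ : IsFinPartition ξ) :
    ENNReal.ofReal (entOfPart f μ ξ) ≤ msEntropy f μ[|s] + μ sᶜ * m := by
  have h := entOfPart_le_of_mix hf (hf.cond hs hfs) (hf.cond hs.compl hfs.compl)
    measureReal_nonneg measureReal_le_one (fun t _ => measureReal_eq_cond_add_cond_compl hs t) hξ
  have hν := entOfPart_nonneg (f := f) μ[|s] ξ
  have hρ := entOfPart_le_card (f := f) μ[|sᶜ] ξ
  have hreal : entOfPart f μ ξ ≤ entOfPart f μ[|s] ξ + μ.real sᶜ * m := by
    rw [probReal_compl_eq_one_sub hs] at *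
    nlinarith [measureReal_le_one (μ := μ) (s := s), measureReal_nonneg (μ := μ) (s := sᶜ)]
  calc ENNReal.ofReal (entOfPart f μ ξ)
      ≤ ENNReal.ofReal (entOfPart f μ[|s] ξ + μ.real sᶜ * m) := ofReal_le_ofReal hreal
    _ = ENNReal.ofReal (entOfPart f μ[|s] ξ) + μ sᶜ * m := by
        rw [ofReal_add hν (by positivity), ofReal_mul measureReal_nonneg, ofReal_measureReal,
          ofReal_natCast]
    _ ≤ msEntropy f μ[|s] + μ sᶜ * m := by gcongr; exact ofReal_entOfPart_le_msEntropy _ hξ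

theorem tendsto_msEntropy_cond (hf : MeasurePreserving f μ μ) {s : ℕ → Set X}
    (hs : ∀ n, MeasurableSet (s n)) (hfs : ∀ n, f ⁻¹' s n =ᵐ[μ] s n)
    (hμs : Tendsto (fun n => μ (s n)) atTop (𝓝 1)) :
    Tendsto (fun n => msEntropy f μ[|s n]) atTop (𝓝 (msEntropy f μ)) := by
  refine tendsto_of_le_liminf_of_limsup_le ?_ ?_
  · refine iSup₂_le fun m ξ => iSup_le fun hξ => ?_
    have hcompl : Tendsto (fun n => μ (s n)ᶜ) atTop (𝓝 0) := by
      simpa [prob_compl_eq_one_sub (hs _)] using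
        ENNReal.Tendsto.sub tendsto_const_nhds hμs (Or.inl one_ne_top)
    calc ENNReal.ofReal (entOfPart f μ ξ)
        ≤ liminf (fun n => msEntropy f μ[|s n] + μ (s n)ᶜ * m) atTop :=
          le_liminf_of_le (by isBoundedDefault) (.of_forall fun n =>
            ofReal_entOfPart_le_msEntropy_cond_add hf (hs n) (hfs n) hξ)
      _ = liminf (fun n => msEntropy f μ[|s n]) atTop :=
          liminf_add_of_right_tendsto_zero
            (by simpa using ENNReal.Tendsto.mul_const hcompl (.inr (natCast_ne_top m))) _
  · have hbound : ∀ᶠ n in atTop, msEntropy f μ[|s n] ≤ msEntropy f μ / μ (s n) :=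
      (hμs.eventually_ne one_ne_zero).mono fun n => msEntropy_cond_le hf.measurable (hs n)
    have hlim : Tendsto (fun n => msEntropy f μ / μ (s n)) atTop (𝓝 (msEntropy f μ)) := by
      simpa using ENNReal.Tendsto.const_div hμs (.inl one_ne_top)
    exact (limsup_le_limsup hbound).trans_eq hlim.limsup_eq

end Conditioning

theorem tendsto_of_eventually_eq_cond {X : Type*} [TopologicalSpace X] [MeasurableSpace X]
    [OpensMeasurableSpace X] {μ : ProbabilityMeasure X} {ν : ℕ → ProbabilityMeasure X}
    {s : ℕ → Set X} (hs : ∀ n, MeasurableSet (s n))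
    (hμs : Tendsto (fun n => (μ : Measure X) (s n)) atTop (𝓝 1))
    (hν : ∀ᶠ n in atTop, (ν n : Measure X) = (μ : Measure X)[|s n]) :
    Tendsto ν atTop (𝓝 μ) := by
  rw [ProbabilityMeasure.tendsto_iff_forall_integral_tendsto]
  intro g
  have hμs' : Tendsto (fun n => (μ : Measure X).real (s n)) atTop (𝓝 1) :=
    ENNReal.toReal_one ▸ (ENNReal.tendsto_toReal one_ne_top).comp hμs
  have hcompl : Tendsto (fun n => ∫ x in (s n)ᶜ, g x ∂μ) atTop (𝓝 0) := by
    refine squeeze_zero_norm (fun n => norm_setIntegral_le_of_norm_le_const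
      (measure_lt_top _ _) fun x _ => g.norm_coe_le_norm x) ?_
    simpa [probReal_compl_eq_one_sub (hs _)] using (hμs'.const_sub 1).const_mul ‖g‖
  have hset : Tendsto (fun n => ∫ x in s n, g x ∂μ) atTop (𝓝 (∫ x, g x ∂μ)) := by
    have h := (tendsto_const_nhds (x := ∫ x, g x ∂μ)).sub hcompl
    rw [sub_zero] at h
    exact h.congr fun n => (eq_sub_of_add_eq (integral_add_compl (hs n) (g.integrable μ))).symm
  have hlim := (hμs'.inv₀ one_ne_zero).mul hset
  rw [inv_one, one_mul] at hlim
  refine hlim.congr' ?_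
  filter_upwards [hν] with n hn
  rw [hn, ProbabilityTheory.cond, integral_smul_measure, ENNReal.toReal_inv, smul_eq_mul]
  rfl

theorem normalized_restriction_tendsto_general
    {X : Type*} [MetricSpace X] [CompactSpace X]
    [MeasurableSpace X] [BorelSpace X]
    (f : X → X) (hf : Continuous f)
    (Xs : ℕ → Set X)
    (hXcomp : ∀ n, IsCompact (Xs n))
    (hXinv : ∀ n, f '' Xs n ⊆ Xs n)
    (hXmono : Monotone Xs)
    (μ : ProbabilityMeasure X) (hμ : μ ∈ invMeas f)
    (hfull : (μ : Measure X) (⋃ n, Xs n) = 1)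
    (ν : ℕ → ProbabilityMeasure X)
    (hν : ∀ n, (μ : Measure X) (Xs n) ≠ 0 → ∀ A : Set X, MeasurableSet A →
      (ν n : Measure X) A = (μ : Measure X) (A ∩ Xs n) / (μ : Measure X) (Xs n)) :
    (∀ n, (μ : Measure X) (Xs n) ≠ 0 → ν n ∈ invMeasOn f (Xs n)) ∧
    Tendsto ν atTop (𝓝 μ) ∧
    Tendsto (fun n => msEntropy f ((ν n : Measure X))) atTop
      (𝓝 (msEntropy f (μ : Measure X))) := by
  have hμf : MeasurePreserving f μ μ := ⟨hf.measurable, hμ⟩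
  have hXmeas n : MeasurableSet (Xs n) := (hXcomp n).isClosed.measurableSet
  have hXae n : f ⁻¹' Xs n =ᵐ[(μ : Measure X)] Xs n :=
    hμf.preimage_ae_eq_of_mapsTo (hXmeas n) (mapsTo_iff_image_subset.2 (hXinv n))
  have hνcond n (hn : (μ : Measure X) (Xs n) ≠ 0) : (ν n : Measure X) = (μ : Measure X)[|Xs n] :=
    Measure.ext fun A hA => by
      rw [hν n hn A hA, cond_apply (hXmeas n), inter_comm, ENNReal.div_eq_inv_mul]
  have hμX : Tendsto (fun n => (μ : Measure X) (Xs n)) atTop (𝓝 1) :=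
    hfull ▸ tendsto_measure_iUnion_atTop hXmono
  have hνev : ∀ᶠ n in atTop, (ν n : Measure X) = (μ : Measure X)[|Xs n] :=
    (hμX.eventually_ne one_ne_zero).mono hνcond
  refine ⟨fun n hn => ?_, tendsto_of_eventually_eq_cond hXmeas hμX hνev, ?_⟩
  · show (ν n : Measure X).map f = ν n ∧ (ν n : Measure X) (Xs n) = 1
    rw [hνcond n hn]
    exact ⟨(hμf.cond (hXmeas n) (hXae n)).map_eq, cond_apply_self hn (measure_ne_top _ _)⟩
  · exact (tendsto_msEntropy_cond hμf hXmeas hXae hμX).congr'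
      (hνev.mono fun n hn => congrArg (msEntropy f) hn.symm)

/-- Lemma: the normalized restrictions `μ_n = μ(· ∩ X_n)/μ(X_n)` of a fully
supported-on-the-union invariant measure are invariant measures of the
subsystems, converge weakly* to `μ`, and their entropies converge to `h_μ(f)`. -/
theorem normalized_restriction_tendsto
    {X : Type*} [MetricSpace X] [CompactSpace X] [Nontrivial X]
    [MeasurableSpace X] [BorelSpace X]
    (f : X → X) (hf : Continuous f)
    (Xs : ℕ → Set X)
    (hXcomp : ∀ n, IsCompact (Xs n))
    (hXinv : ∀ n, f '' Xs n ⊆ Xs n)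
    (hXmono : Monotone Xs)
    (hXdense : closure (⋃ n, Xs n) = Set.univ)
    (μ : ProbabilityMeasure X) (hμ : μ ∈ invMeas f)
    (hfull : (μ : Measure X) (⋃ n, Xs n) = 1)
    (ν : ℕ → ProbabilityMeasure X)
    (hν : ∀ n, (μ : Measure X) (Xs n) ≠ 0 → ∀ A : Set X, MeasurableSet A →
      (ν n : Measure X) A = (μ : Measure X) (A ∩ Xs n) / (μ : Measure X) (Xs n)) :
    (∀ n, (μ : Measure X) (Xs n) ≠ 0 → ν n ∈ invMeasOn f (Xs n)) ∧
    Tendsto ν atTop (𝓝 μ) ∧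
    Tendsto (fun n => msEntropy f ((ν n : Measure X))) atTop
      (𝓝 (msEntropy f (μ : Measure X))) :=
  normalized_restriction_tendsto_general f hf Xs hXcomp hXinv hXmono μ hμ hfull ν hν
end
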